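/- arXiv:1906.00071 — 3 statements merged into one kernel-verified Lean document; each statement's English description precedes it below -/
import Mathlib

section
/- Let n be a natural number and let N be a complex number with N ∉ ℤ and −(n+1) < Re N < 0. Define the interpolated Euler characteristic χ_P(O(n)) := Γ(N+n+1)/(Γ(n+1)·Γ(N+1)). Then χ_P(O(n)) = ((e^{2πi(N+1)} − 1)/(2πi)) · ∫_{−∞}^{0} e^{nξ} · (1 − e^{−ξ})^{−(N+1)} dξ, where for ξ < 0 the power (1 − e^{−ξ})^{−(N+1)} of the negative real number 1 − e^{−ξ} is taken with the principal branch of the complex power (argument π). -/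
/-!
Substituting `t = e^ξ` maps `(-∞, 0)` onto `(0, 1)`. There `1 - e^{-ξ} = -(1 - t)/t` is a
negative real, so its principal power picks up the phase `e^{πi s}`, and the integral becomes
`e^{-πi(N+1)} B(N+n+1, -N) = e^{-πi(N+1)} Γ(N+n+1) Γ(-N) / Γ(n+1)`. The prefactor combines
with the phase into `sin(π(N+1))/π`, and Euler's reflection formula turns
`sin(π(N+1))/π · Γ(-N)` into `1/Γ(N+1)`.
-/

open MeasureTheory Complex Real Set

theorem setIntegral_Iio_exp_smul_comp_exp {E : Type*} [NormedAddCommGroup E]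
    [NormedSpace ℝ E] (g : ℝ → E) :
    ∫ ξ in Iio (0 : ℝ), Real.exp ξ • g (Real.exp ξ) = ∫ t in Ioo (0 : ℝ) 1, g t := by
  rw [← Real.exp_zero, ← image_exp_Iio, integral_image_eq_integral_abs_deriv_smul
    measurableSet_Iio (fun x _ ↦ (Real.hasDerivAt_exp x).hasDerivWithinAt)
    Real.exp_injective.injOn g]
  simp_rw [abs_of_pos (Real.exp_pos _)]

theorem Complex.betaIntegral_eq_setIntegral_Ioo (u v : ℂ) :
    betaIntegral u v =
      ∫ t in Ioo (0 : ℝ) 1, (t : ℂ) ^ (u - 1) * (1 - (t : ℂ)) ^ (v - 1) := by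
  rw [betaIntegral, intervalIntegral.integral_of_le zero_le_one, integral_Ioc_eq_integral_Ioo]

theorem Complex.one_sub_inv_ofReal_cpow {t : ℝ} (h₀ : 0 < t) (h₁ : t ≤ 1) (s : ℂ) :
    (1 - (t : ℂ)⁻¹) ^ s = cexp (π * I * s) * ((1 - t : ℂ) ^ s / (t : ℂ) ^ s) := by
  have hnonpos : 1 - t⁻¹ ≤ 0 := sub_nonpos.mpr (one_le_inv₀ h₀ |>.mpr h₁)
  have hdiv : -(1 - t⁻¹) = (1 - t) / t := by field_simp; ring
  have := ofReal_cpow_of_nonpos hnonpos s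
  rw [← ofReal_neg, hdiv, ofReal_div, div_cpow_ofReal_nonneg (by linarith) h₀.le] at this
  push_cast at this
  rw [this, mul_comm]

theorem Complex.sin_pi_mul_div_pi_eq_exp (z : ℂ) :
    sin (π * z) / π = (cexp (2 * π * I * z) - 1) / (2 * π * I) * cexp (π * I * -z) := by
  have hπ : (π : ℂ) ≠ 0 := ofReal_ne_zero.mpr pi_ne_zero
  set w := cexp (π * I * z) with hw
  have hw0 : w ≠ 0 := Complex.exp_ne_zero _
  have h2 : cexp (2 * π * I * z) = w * w := by rw [hw, ← Complex.exp_add]; ring_nf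
  have hneg : cexp (π * I * -z) = w⁻¹ := by rw [hw, ← Complex.exp_neg]; ring_nf
  have hsin : sin (π * z) = (w⁻¹ - w) * I / 2 := by
    rw [Complex.sin, hw, ← Complex.exp_neg]; ring_nf
  rw [h2, hneg, hsin]
  field_simp
  linear_combination (1 - w ^ 2) * I_sq

theorem Complex.sin_pi_mul_div_pi_mul_Gamma_one_sub {z : ℂ} (h : Gamma (1 - z) ≠ 0) :
    sin (π * z) / π * Gamma (1 - z) = (Gamma z)⁻¹ := by
  have hπ : (π : ℂ) ≠ 0 := ofReal_ne_zero.mpr pi_ne_zero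
  have hrefl := Gamma_mul_Gamma_one_sub z
  rcases eq_or_ne (Gamma z) 0 with hz | hz
  -- at a pole `Γ z` has the junk value `0`, and then so does `sin (π * z)`
  · rw [hz, zero_mul, eq_comm, div_eq_zero_iff] at hrefl
    simp [hrefl.resolve_left hπ, hz]
  · have hsin : sin (π * z) ≠ 0 := fun h0 ↦ by simp_all
    field_simp
    rw [mul_assoc, mul_comm (Gamma (1 - z)), hrefl]
    field_simp

theorem Complex.setIntegral_Iio_cexp_mul_one_sub_cexp_neg_cpow (a s : ℂ) :
    ∫ ξ in Iio (0 : ℝ), cexp (a * ξ) * (1 - cexp (-ξ)) ^ s =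
      cexp (π * I * s) * betaIntegral (a - s) (s + 1) := by
  have key : ∀ ξ ∈ Iio (0 : ℝ), cexp (a * ξ) * (1 - cexp (-ξ)) ^ s =
      Real.exp ξ • (cexp (π * I * s) *
        ((Real.exp ξ : ℂ) ^ (a - s - 1) * (1 - (Real.exp ξ : ℂ)) ^ (s + 1 - 1))) := by
    intro ξ hξ
    have ht : (Real.exp ξ : ℂ) ≠ 0 := ofReal_ne_zero.mpr (Real.exp_pos ξ).ne'
    have hpow : cexp (a * ξ) = (Real.exp ξ : ℂ) ^ a := by
      rw [cpow_def_of_ne_zero ht, ← ofReal_log (Real.exp_pos ξ).le, Real.log_exp, mul_comm]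
    rw [hpow, Complex.exp_neg, ← ofReal_exp, one_sub_inv_ofReal_cpow (Real.exp_pos ξ)
      (Real.exp_le_one_iff.mpr (le_of_lt hξ)), add_sub_cancel_right, cpow_sub _ _ ht,
      cpow_sub _ _ ht, cpow_one, real_smul]
    field_simp
  rw [setIntegral_congr_fun measurableSet_Iio key, setIntegral_Iio_exp_smul_comp_exp
    (fun t ↦ cexp (π * I * s) * ((t : ℂ) ^ (a - s - 1) * (1 - (t : ℂ)) ^ (s + 1 - 1))),
    integral_const_mul, betaIntegral_eq_setIntegral_Ioo]

theorem chi_proj_eq_halfline_integral_general (n : ℕ) (N : ℂ)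
    (h₁ : -(n + 1 : ℝ) < N.re) (h₂ : N.re < 0) :
    Complex.Gamma (N + n + 1) / (Complex.Gamma (n + 1) * Complex.Gamma (N + 1)) =
      (Complex.exp (2 * Real.pi * Complex.I * (N + 1)) - 1) / (2 * Real.pi * Complex.I) *
        ∫ ξ in Set.Iio (0 : ℝ),
          Complex.exp (n * ξ) * (1 - Complex.exp (-(ξ : ℂ))) ^ (-(N + 1)) := by
  have hu : 0 < (N + n + 1).re := by simp only [add_re, natCast_re, one_re]; linarith
  have hv : 0 < (-N).re := by simp only [neg_re]; linarith
  have hΓn : Complex.Gamma (n + 1) ≠ 0 := Gamma_ne_zero_of_re_pos (by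
    simp only [add_re, natCast_re, one_re]; positivity)
  have hbeta : betaIntegral (N + n + 1) (-N) =
      Complex.Gamma (N + n + 1) * Complex.Gamma (-N) / Complex.Gamma (n + 1) := by
    rw [Gamma_mul_Gamma_eq_betaIntegral hu hv, show N + n + 1 + -N = n + 1 by ring,
      mul_div_cancel_left₀ _ hΓn]
  have hrefl : sin (π * (N + 1)) / π * Complex.Gamma (-N) = (Complex.Gamma (N + 1))⁻¹ := by
    have hsub : 1 - (N + 1) = -N := by ring
    exact hsub ▸ sin_pi_mul_div_pi_mul_Gamma_one_sub (hsub ▸ Gamma_ne_zero_of_re_pos hv)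
  calc Complex.Gamma (N + n + 1) / (Complex.Gamma (n + 1) * Complex.Gamma (N + 1))
      = Complex.Gamma (N + n + 1) / Complex.Gamma (n + 1) *
          (sin (π * (N + 1)) / π * Complex.Gamma (-N)) := by rw [hrefl]; ring
    _ = sin (π * (N + 1)) / π * betaIntegral (N + n + 1) (-N) := by rw [hbeta]; ring
    _ = _ := by
        rw [setIntegral_Iio_cexp_mul_one_sub_cexp_neg_cpow, sin_pi_mul_div_pi_eq_exp,
          mul_assoc, show (n : ℂ) - -(N + 1) = N + n + 1 by ring, show -(N + 1) + 1 = -N by ring]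

/-- **Proposition 1** (interpolated Riemann–Roch for projective space).
For `n ∈ ℕ` and `N ∈ ℂ` with `N ∉ ℤ` and `-(n+1) < Re N < 0`, the interpolated
Euler characteristic `χ_P(O(n)) = Γ(N+n+1)/(Γ(n+1)Γ(N+1))` equals
`((e^{2πi(N+1)} - 1)/(2πi)) ∫_{-∞}^0 e^{nξ} (1 - e^{-ξ})^{-(N+1)} dξ`,
complex powers being principal. -/
theorem chi_proj_eq_halfline_integral (n : ℕ) (N : ℂ)
    (hN : N ∉ Set.range ((↑) : ℤ → ℂ))
    (h₁ : -(n + 1 : ℝ) < N.re) (h₂ : N.re < 0) :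
    Complex.Gamma (N + n + 1) / (Complex.Gamma (n + 1) * Complex.Gamma (N + 1)) =
      (Complex.exp (2 * Real.pi * Complex.I * (N + 1)) - 1) / (2 * Real.pi * Complex.I) *
        ∫ ξ in Set.Iio (0 : ℝ),
          Complex.exp (n * ξ) * (1 - Complex.exp (-(ξ : ℂ))) ^ (-(N + 1)) :=
  chi_proj_eq_halfline_integral_general n N h₁ h₂
end

section
/- Let k ≥ 1 and n be natural numbers and let N be a complex number with N ∉ ℤ. Then ∏_{j=0}^{k−1} Γ(N+n+j+1)·Γ(j+1)/(Γ(n+j+1)·Γ(N+j+1)) = ((−1)^{k(k−1)/2}/k!) · (sin(π(N+1))/π)^k · ∏_{i=0}^{k−1} Γ(n+N+1+i)·Γ(−N−k+1+i)·Γ(2+i)/Γ(n+1+i). -/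
/-!
By Euler's reflection formula, `1 / Γ(N + j + 1) = (-1)^j (sin (π (N + 1)) / π) Γ(-N - j)` for
`N ∉ ℤ`, and `Γ(j + 1) = Γ(2 + j) / (j + 1)`. Multiplying over `j < k`, the signs contribute
`(-1)^(k(k-1)/2)`, the factors `j + 1` contribute `k!`, and reversing the order of the factors
turns `∏ Γ(-N - j)` into `∏ Γ(-N - k + 1 + i)`.
-/

open Complex Real Finset

namespace Complex

theorem sin_pi_mul_ne_zero {z : ℂ} (hz : z ∉ Set.range ((↑) : ℤ → ℂ)) :
    sin (π * z) ≠ 0 := by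
  refine sin_ne_zero_iff.mpr fun m hm => hz ⟨m, ?_⟩
  have hπ : (π : ℂ) ≠ 0 := ofReal_ne_zero.mpr pi_ne_zero
  exact mul_right_cancel₀ hπ (hm.symm.trans (mul_comm _ _))

theorem sin_pi_mul_neg_sub_natCast (z : ℂ) (j : ℕ) :
    sin (π * (-z - j)) = (-1) ^ j * sin (π * (z + 1)) := by
  induction j with
  | zero => simp [mul_add, sin_add_pi, ← sin_neg]
  | succ j ih =>
    rw [show (π : ℂ) * (-z - ↑(j + 1)) = π * (-z - j) - π by push_cast; ring, sin_sub_pi, ih]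
    ring

theorem inv_Gamma_add_natCast_add_one {z : ℂ} (hz : z ∉ Set.range ((↑) : ℤ → ℂ))
    (j : ℕ) :
    (Gamma (z + j + 1))⁻¹ = (-1) ^ j * (sin (π * (z + 1)) / π) * Gamma (-z - j) := by
  have hπ : (π : ℂ) ≠ 0 := ofReal_ne_zero.mpr pi_ne_zero
  have hsin : sin (π * (z + 1)) ≠ 0 := by
    rw [mul_add, mul_one, sin_add_pi, neg_ne_zero]
    exact sin_pi_mul_ne_zero hz
  have hreflect := Gamma_mul_Gamma_one_sub (-z - j)
  rw [sin_pi_mul_neg_sub_natCast, show 1 - (-z - j) = z + j + 1 by ring] at hreflect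
  refine (eq_inv_of_mul_eq_one_left ?_).symm
  rw [mul_assoc, hreflect]
  field_simp

end Complex

theorem Finset.prod_range_comp_sub_natCast {R M : Type*} [CommRing R] [CommMonoid M]
    (f : R → M) (w : R) (k : ℕ) :
    ∏ j ∈ range k, f (w - j) = ∏ i ∈ range k, f (w - k + 1 + i) := by
  rw [← prod_range_reflect (fun i => f (w - k + 1 + i)) k]
  refine prod_congr rfl fun j hj => congrArg f ?_
  have hjk := mem_range.mp hj
  rw [Nat.cast_sub (by omega), Nat.cast_sub (by omega)]
  push_cast
  ring

theorem chi_grassmannian_eq_selberg_evaluation_general (k n : ℕ) (N : ℂ)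
    (hN : N ∉ Set.range ((↑) : ℤ → ℂ)) :
    (∏ j ∈ Finset.range k,
        Complex.Gamma (N + n + j + 1) * Complex.Gamma (j + 1) /
          (Complex.Gamma (n + j + 1) * Complex.Gamma (N + j + 1))) =
      ((-1 : ℂ) ^ (k * (k - 1) / 2) / (Nat.factorial k : ℂ)) *
        (Complex.sin (Real.pi * (N + 1)) / Real.pi) ^ k *
        ∏ i ∈ Finset.range k,
          Complex.Gamma ((n : ℂ) + N + 1 + i) * Complex.Gamma (-N - k + 1 + i) *
            Complex.Gamma (2 + i) / Complex.Gamma ((n : ℂ) + 1 + i) := by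
  set c := Complex.sin (Real.pi * (N + 1)) / Real.pi with hc
  set A : ℕ → ℂ := fun i => Complex.Gamma ((n : ℂ) + N + 1 + i) * Complex.Gamma (2 + i) /
    Complex.Gamma ((n : ℂ) + 1 + i) with hA
  have hterm (j : ℕ) : Complex.Gamma (N + n + j + 1) * Complex.Gamma (j + 1) /
      (Complex.Gamma (n + j + 1) * Complex.Gamma (N + j + 1)) =
        (-1) ^ j * c / (j + 1) * (A j * Complex.Gamma (-N - j)) := by
    have hj : (j : ℂ) + 1 ≠ 0 := Nat.cast_add_one_ne_zero j
    simp only [hA, hc]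
    rw [div_mul_eq_div_div, div_eq_mul_inv _ (Complex.Gamma _),
      inv_Gamma_add_natCast_add_one hN, show (2 : ℂ) + j = j + 1 + 1 by ring, Gamma_add_one _ hj,
      show (n : ℂ) + N + 1 + j = N + n + j + 1 by ring,
      show (n : ℂ) + 1 + j = n + j + 1 by ring]
    field_simp
  have hfactorial : ∏ j ∈ range k, ((j : ℂ) + 1) = k.factorial := by
    exact_mod_cast prod_range_add_one_eq_factorial k
  calc _ = ∏ j ∈ range k, (-1) ^ j * c / (j + 1) * (A j * Complex.Gamma (-N - j)) :=
        prod_congr rfl fun j _ => hterm j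
    _ = (-1) ^ (k * (k - 1) / 2) / k.factorial * c ^ k *
          ∏ i ∈ range k, A i * Complex.Gamma (-N - k + 1 + i) := by
      rw [prod_mul_distrib, prod_div_distrib, prod_mul_distrib, prod_pow_eq_pow_sum,
        sum_range_id, prod_const, card_range, hfactorial, prod_mul_distrib, prod_mul_distrib,
        prod_range_comp_sub_natCast (fun w => Complex.Gamma w)]
      ring
    _ = _ := by
      congr 1
      exact prod_congr rfl fun i _ => by simp only [A]; ring

/-- **Proposition 2**, Gamma-function form: for `k ≥ 1`, `n ∈ ℕ` and `N ∈ ℂ`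
with `N ∉ ℤ`, the interpolated Euler characteristic
`χ_G(k,N,n) = ∏_{j=0}^{k-1} Γ(N+n+j+1)Γ(j+1)/(Γ(n+j+1)Γ(N+j+1))` equals
`((-1)^{k(k-1)/2}/k!) (sin(π(N+1))/π)^k` times Selberg's closed-form evaluation
`∏_{i=0}^{k-1} Γ(n+N+1+i)Γ(-N-k+1+i)Γ(2+i)/Γ(n+1+i)`. -/
theorem chi_grassmannian_eq_selberg_evaluation (k n : ℕ) (hk : 1 ≤ k) (N : ℂ)
    (hN : N ∉ Set.range ((↑) : ℤ → ℂ)) :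
    (∏ j ∈ Finset.range k,
        Complex.Gamma (N + n + j + 1) * Complex.Gamma (j + 1) /
          (Complex.Gamma (n + j + 1) * Complex.Gamma (N + j + 1))) =
      ((-1 : ℂ) ^ (k * (k - 1) / 2) / (Nat.factorial k : ℂ)) *
        (Complex.sin (Real.pi * (N + 1)) / Real.pi) ^ k *
        ∏ i ∈ Finset.range k,
          Complex.Gamma ((n : ℂ) + N + 1 + i) * Complex.Gamma (-N - k + 1 + i) *
            Complex.Gamma (2 + i) / Complex.Gamma ((n : ℂ) + 1 + i) :=
  chi_grassmannian_eq_selberg_evaluation_general k n N hN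
end

section
/- For every natural number n, ∏_{j=0}^{1} Γ(n + j + 1/2)·Γ(j+1)/(Γ(n+j+1)·Γ(j + 1/2)) = (2n choose n)·(2n+2 choose n+1)/(2·16^n). -/
open Real Finset

/-!
Both factors are quotients of a Gamma value at a half-integer by one at an integer. The
half-integer values `Γ(m + 1/2) = √π · m! · C(2m, m) / 4^m` (induction on `m`) turn the
`j = 0` factor into `C(2n, n) / 4^n` and, since `Γ(3/2) = √π / 2`, the `j = 1` factor into
`2 · C(2n+2, n+1) / 4^(n+1)`.
-/

open Nat in
theorem Real.Gamma_nat_add_half_eq_centralBinom (m : ℕ) :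
    Gamma (m + 1 / 2) = √π * m ! * centralBinom m / 4 ^ m := by
  induction m with
  | zero => simp [-one_div, Gamma_one_half_eq]
  | succ m ih =>
    have hcb : (centralBinom (m + 1) : ℝ) = 2 * (2 * m + 1) * centralBinom m / (m + 1) := by
      rw [eq_div_iff (by positivity), mul_comm]
      exact_mod_cast succ_mul_centralBinom_succ m
    rw [Nat.cast_succ, add_right_comm, Gamma_add_one (by positivity), ih, factorial_succ, hcb]
    push_cast
    field_simp
    ring

theorem Real.Gamma_nat_add_half_div_eq_centralBinom (m : ℕ) :
    Gamma (m + 1 / 2) / (Gamma (m + 1) * Gamma (1 / 2)) = Nat.centralBinom m / 4 ^ m := by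
  rw [Gamma_nat_add_half_eq_centralBinom, Gamma_nat_eq_factorial, Gamma_one_half_eq]
  have : (m.factorial : ℝ) ≠ 0 := by positivity
  field_simp

/-- The interpolated Euler characteristic of `O(n)` on the Grassmannian
`G(2, 3/2)` (i.e. `k = 2`, `N = -1/2`): for every `n ∈ ℕ`,
`∏_{j=0}^{1} Γ(n+j+1/2)Γ(j+1)/(Γ(n+j+1)Γ(j+1/2))
  = (2n choose n)(2n+2 choose n+1)/(2·16ⁿ)`,
giving the coefficients `1, 6, 60, 700, 8820, …` of the Hilbert series at
`(t/16)ⁿ`. -/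
theorem chi_G2_half (n : ℕ) :
    (∏ j ∈ Finset.range 2,
        Real.Gamma (n + j + 1 / 2) * Real.Gamma (j + 1) /
          (Real.Gamma (n + j + 1) * Real.Gamma (j + 1 / 2))) =
      ((2 * n).choose n : ℝ) * ((2 * n + 2).choose (n + 1)) / (2 * 16 ^ n) := by
  have hΓ_two : Gamma (1 + 1) = 1 := by rw [one_add_one_eq_two, Gamma_two]
  have hΓ_three_halves : Gamma (1 + 1 / 2) = Gamma (1 / 2) / 2 := by
    rw [add_comm, Gamma_add_one (by norm_num)]
    ring
  have hfactor₁ : Gamma (n + 1 + 1 / 2) * Gamma (1 + 1) / (Gamma (n + 1 + 1) * Gamma (1 + 1 / 2))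
      = 2 * (Nat.centralBinom (n + 1) / 4 ^ (n + 1)) := by
    rw [hΓ_two, hΓ_three_halves, ← Gamma_nat_add_half_div_eq_centralBinom, Nat.cast_add_one]
    field_simp
  rw [prod_range_succ, prod_range_one]
  simp only [Nat.cast_zero, Nat.cast_one, add_zero, zero_add, Gamma_one, mul_one, hfactor₁,
    Gamma_nat_add_half_div_eq_centralBinom, Nat.centralBinom_eq_two_mul_choose]
  rw [show 2 * (n + 1) = 2 * n + 2 by ring, show (16 : ℝ) ^ n = 4 ^ n * 4 ^ n by
    rw [← mul_pow]; norm_num]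
  field_simp
  ring
end
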